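/- If Ψ_{U,M,N} is well defined and U = U_1 ⊔ … ⊔ U_k is a partition of U into clopen sets, then each Ψ_{U_i,M,N} is well defined, these transformations pairwise commute, and Ψ_{U,M,N} = Ψ_{U_1,M,N} ∘ … ∘ Ψ_{U_k,M,N}. Moreover, if N − M ≥ 2 and M < K < N, then Ψ_{U,M,N} = Ψ_{U,M,K} ∘ Ψ_{U,K,N}. -/

import Mathlib

open scoped Classical

variable {X : Type*} [TopologicalSpace X]

/-- The `i`-th power (for `i : ℤ`) of the homeomorphism `T`, as a map `X → X`. -/
def Tpow (T : X ≃ₜ X) (i : ℤ) : X → X := ⇑((T.toEquiv ^ i : Equiv.Perm X))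

/-- `Ψ_{U,M,N}` is well defined: the sets `T^M(U), …, T^N(U)` are pairwise disjoint. -/
def PsiDefined (T : X ≃ₜ X) (U : Set X) (M N : ℤ) : Prop :=
  ∀ i j : ℤ, M ≤ i → i ≤ N → M ≤ j → j ≤ N → i ≠ j →
    Disjoint (Tpow T i '' U) (Tpow T j '' U)

/-- The transformation `Ψ_{U,M,N}`: equal to `T` on `T^M(U) ∪ … ∪ T^{N-1}(U)`,
to `T^{M-N}` on `T^N(U)`, and to the identity elsewhere. -/
noncomputable def Psi (T : X ≃ₜ X) (U : Set X) (M N : ℤ) : X → X := fun x =>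
  if ∃ i : ℤ, M ≤ i ∧ i < N ∧ x ∈ Tpow T i '' U then T x
  else if x ∈ Tpow T N '' U then Tpow T (M - N) x
  else x

/-! `Ψ_{U,M,N}` is the identity off the orbit segment `T^M(U) ∪ … ∪ T^N(U)` and maps
this segment into itself. For disjoint `V, W ⊆ U` the segments of `V` and `W` are disjoint, so
`Ψ_V` and `Ψ_W` act on disjoint invariant sets, where each agrees with `Ψ_{V ∪ W}`; hence
`Ψ_{V ∪ W} = Ψ_V ∘ Ψ_W = Ψ_W ∘ Ψ_V`, and induction on the number of pieces gives the product
formula.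
For `M < K < N`, `Ψ_{U,K,N}` moves the points of `T^K(U), …, T^{N-1}(U)` one step forward and
sends `T^N(U)` back to `T^K(U)`, from where `Ψ_{U,M,K}` sends it on to `T^M(U)`. -/

def orbitSegment (T : X ≃ₜ X) (U : Set X) (M N : ℤ) : Set X :=
  ⋃ l ∈ Set.Icc M N, Tpow T l '' U

theorem tpow_add (T : X ≃ₜ X) (a b : ℤ) (x : X) :
    Tpow T (a + b) x = Tpow T a (Tpow T b x) := by
  simp [Tpow, zpow_add]

theorem tpow_one (T : X ≃ₜ X) (x : X) : Tpow T 1 x = T x := by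
  simp [Tpow]

theorem tpow_injective (T : X ≃ₜ X) (l : ℤ) : Function.Injective (Tpow T l) :=
  (T.toEquiv ^ l : Equiv.Perm X).injective

section

variable {T : X ≃ₜ X} {U V W : Set X} {M N K l : ℤ} {x : X}

theorem tpow_mem_image_tpow (a : ℤ) (hx : x ∈ Tpow T l '' U) :
    Tpow T a x ∈ Tpow T (a + l) '' U := by
  obtain ⟨u, hu, rfl⟩ := hx
  exact ⟨u, hu, tpow_add T a l u⟩

theorem mem_orbitSegment : x ∈ orbitSegment T U M N ↔ ∃ l ∈ Set.Icc M N, x ∈ Tpow T l '' U := by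
  simp [orbitSegment]

theorem orbitSegment_mono {M' N' : ℤ} (hsub : Set.Icc M' N' ⊆ Set.Icc M N) :
    orbitSegment T U M' N' ⊆ orbitSegment T U M N :=
  Set.biUnion_subset_biUnion_left hsub

theorem orbitSegment_union :
    orbitSegment T (V ∪ W) M N = orbitSegment T V M N ∪ orbitSegment T W M N := by
  simp [orbitSegment, Set.image_union, Set.iUnion_union_distrib]

theorem PsiDefined.mono {M' N' : ℤ} (h : PsiDefined T U M N) (hVU : V ⊆ U) (hM : M ≤ M')
    (hN : N' ≤ N) : PsiDefined T V M' N' :=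
  fun i j hi hi' hj hj' hij =>
    (h i j (hM.trans hi) (hi'.trans hN) (hM.trans hj) (hj'.trans hN) hij).mono
      (Set.image_mono hVU) (Set.image_mono hVU)

theorem PsiDefined.not_mem_orbitSegment {M' N' : ℤ} (h : PsiDefined T U M N)
    (hl : l ∈ Set.Icc M N) (hx : x ∈ Tpow T l '' U) (hsub : Set.Icc M' N' ⊆ Set.Icc M N)
    (hl' : l ∉ Set.Icc M' N') : x ∉ orbitSegment T U M' N' := by
  rw [mem_orbitSegment]
  rintro ⟨m, hm, hxm⟩
  have hne : l ≠ m := by rintro rfl; exact hl' hm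
  exact Set.disjoint_left.1 (h l m hl.1 hl.2 (hsub hm).1 (hsub hm).2 hne) hx hxm

theorem PsiDefined.disjoint_orbitSegment (h : PsiDefined T U M N) (hVU : V ⊆ U) (hWU : W ⊆ U)
    (hVW : Disjoint V W) : Disjoint (orbitSegment T V M N) (orbitSegment T W M N) := by
  rw [Set.disjoint_left]
  intro x hxV hxW
  obtain ⟨l, hl, hxl⟩ := mem_orbitSegment.1 hxV
  obtain ⟨m, hm, hxm⟩ := mem_orbitSegment.1 hxW
  rcases eq_or_ne l m with rfl | hne
  · exact Set.disjoint_left.1 (Set.disjoint_image_of_injective (tpow_injective T l) hVW) hxl hxm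
  · exact Set.disjoint_left.1 ((h l m hl.1 hl.2 hm.1 hm.2 hne).mono
      (Set.image_mono hVU) (Set.image_mono hWU)) hxl hxm

theorem psi_apply_of_mem_of_lt (hMl : M ≤ l) (hlN : l < N) (hx : x ∈ Tpow T l '' U) :
    Psi T U M N x = T x :=
  if_pos ⟨l, hMl, hlN, hx⟩

theorem PsiDefined.psi_apply_of_mem_top (h : PsiDefined T U M N) (hx : x ∈ Tpow T N '' U) :
    Psi T U M N x = Tpow T (M - N) x := by
  have hlow : ¬ ∃ i, M ≤ i ∧ i < N ∧ x ∈ Tpow T i '' U := fun ⟨i, hMi, hiN, hxi⟩ =>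
    Set.disjoint_left.1 (h i N hMi hiN.le (hMi.trans hiN.le) le_rfl hiN.ne) hxi hx
  rw [Psi, if_neg hlow, if_pos hx]

theorem psi_apply_of_not_mem_orbitSegment (hMN : M ≤ N) (hx : x ∉ orbitSegment T U M N) :
    Psi T U M N x = x := by
  rw [mem_orbitSegment] at hx
  have hlow : ¬ ∃ i, M ≤ i ∧ i < N ∧ x ∈ Tpow T i '' U := fun ⟨i, hMi, hiN, hxi⟩ =>
    hx ⟨i, ⟨hMi, hiN.le⟩, hxi⟩
  rw [Psi, if_neg hlow, if_neg fun hxN => hx ⟨N, ⟨hMN, le_rfl⟩, hxN⟩]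

theorem psi_apply_mem_of_lt (hMl : M ≤ l) (hlN : l < N) (hx : x ∈ Tpow T l '' U) :
    Psi T U M N x ∈ Tpow T (l + 1) '' U := by
  rw [psi_apply_of_mem_of_lt hMl hlN hx, ← tpow_one T x, add_comm]
  exact tpow_mem_image_tpow 1 hx

theorem PsiDefined.psi_apply_mem_of_top (h : PsiDefined T U M N) (hx : x ∈ Tpow T N '' U) :
    Psi T U M N x ∈ Tpow T M '' U := by
  rw [h.psi_apply_of_mem_top hx]
  simpa using tpow_mem_image_tpow (M - N) hx

theorem PsiDefined.mapsTo_psi (h : PsiDefined T U M N) :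
    Set.MapsTo (Psi T U M N) (orbitSegment T U M N) (orbitSegment T U M N) := by
  intro x hx
  obtain ⟨l, ⟨hMl, hlN⟩, hxl⟩ := mem_orbitSegment.1 hx
  rw [mem_orbitSegment]
  rcases hlN.lt_or_eq with hlN | rfl
  · exact ⟨l + 1, ⟨by omega, by omega⟩, psi_apply_mem_of_lt hMl hlN hxl⟩
  · exact ⟨M, ⟨le_rfl, hMl⟩, h.psi_apply_mem_of_top hxl⟩

theorem PsiDefined.psi_apply_eq_of_subset (h : PsiDefined T U M N) (hVU : V ⊆ U)
    (hx : x ∈ orbitSegment T V M N) : Psi T U M N x = Psi T V M N x := by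
  obtain ⟨l, ⟨hMl, hlN⟩, hxl⟩ := mem_orbitSegment.1 hx
  rcases hlN.lt_or_eq with hlN | rfl
  · rw [psi_apply_of_mem_of_lt hMl hlN (Set.image_mono hVU hxl),
      psi_apply_of_mem_of_lt hMl hlN hxl]
  · rw [h.psi_apply_of_mem_top (Set.image_mono hVU hxl),
      (h.mono hVU le_rfl le_rfl).psi_apply_of_mem_top hxl]

theorem PsiDefined.psi_union (h : PsiDefined T U M N) (hMN : M ≤ N) (hVU : V ⊆ U) (hWU : W ⊆ U)
    (hVW : Disjoint V W) : Psi T (V ∪ W) M N = Psi T V M N ∘ Psi T W M N := by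
  have hunion : PsiDefined T (V ∪ W) M N := h.mono (Set.union_subset hVU hWU) le_rfl le_rfl
  have hdisj := h.disjoint_orbitSegment hVU hWU hVW
  funext x
  by_cases hxV : x ∈ orbitSegment T V M N
  · have hxW : x ∉ orbitSegment T W M N := Set.disjoint_left.1 hdisj hxV
    rw [Function.comp_apply, psi_apply_of_not_mem_orbitSegment hMN hxW,
      hunion.psi_apply_eq_of_subset Set.subset_union_left hxV]
  by_cases hxW : x ∈ orbitSegment T W M N
  · have hWW := (h.mono hWU le_rfl le_rfl).mapsTo_psi hxW
    rw [Function.comp_apply,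
      psi_apply_of_not_mem_orbitSegment hMN (Set.disjoint_right.1 hdisj hWW),
      hunion.psi_apply_eq_of_subset Set.subset_union_right hxW]
  have hxVW : x ∉ orbitSegment T (V ∪ W) M N := by
    rw [orbitSegment_union]
    exact fun hx => hx.elim hxV hxW
  rw [Function.comp_apply, psi_apply_of_not_mem_orbitSegment hMN hxW,
    psi_apply_of_not_mem_orbitSegment hMN hxV, psi_apply_of_not_mem_orbitSegment hMN hxVW]

theorem PsiDefined.foldr_map_psi (h : PsiDefined T U M N) (hMN : M ≤ N) {Ls : List (Set X)}
    (hsub : ∀ s ∈ Ls, s ⊆ U) (hdisj : Ls.Pairwise Disjoint) :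
    (Ls.map (Psi T · M N)).foldr (· ∘ ·) id = Psi T (⋃ s ∈ Ls, s) M N := by
  induction Ls with
  | nil =>
    funext x
    simp [Psi]
  | cons V Ls ih =>
    rw [List.pairwise_cons] at hdisj
    have hLs : ⋃ s ∈ Ls, s ⊆ U := Set.iUnion₂_subset fun s hs => hsub s (by simp [hs])
    have hVLs : Disjoint V (⋃ s ∈ Ls, s) := Set.disjoint_iUnion₂_right.2 hdisj.1
    have hcons : ⋃ s ∈ V :: Ls, s = V ∪ ⋃ s ∈ Ls, s := by simp
    rw [List.map_cons, List.foldr_cons, ih (fun s hs => hsub s (by simp [hs])) hdisj.2, hcons,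
      h.psi_union hMN (hsub V (by simp)) hLs hVLs]

theorem PsiDefined.psi_eq_comp (h : PsiDefined T U M N) (hMK : M < K) (hKN : K < N) :
    Psi T U M N = Psi T U M K ∘ Psi T U K N := by
  have hlow : Set.Icc M K ⊆ Set.Icc M N := Set.Icc_subset_Icc le_rfl hKN.le
  have hhigh : Set.Icc K N ⊆ Set.Icc M N := Set.Icc_subset_Icc hMK.le le_rfl
  funext x
  rw [Function.comp_apply]
  by_cases hx : x ∈ orbitSegment T U M N
  swap
  · rw [psi_apply_of_not_mem_orbitSegment hKN.le fun hx' => hx (orbitSegment_mono hhigh hx'),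
      psi_apply_of_not_mem_orbitSegment hMK.le fun hx' => hx (orbitSegment_mono hlow hx'),
      psi_apply_of_not_mem_orbitSegment (hMK.trans hKN).le hx]
  obtain ⟨l, hl, hxl⟩ := mem_orbitSegment.1 hx
  rcases lt_or_ge l K with hlK | hKl
  · have hfix : Psi T U K N x = x := psi_apply_of_not_mem_orbitSegment hKN.le
      (h.not_mem_orbitSegment hl hxl hhigh fun hl' => hlK.not_ge hl'.1)
    rw [hfix, psi_apply_of_mem_of_lt hl.1 (hlK.trans hKN) hxl, psi_apply_of_mem_of_lt hl.1 hlK hxl]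
  rcases hl.2.lt_or_eq with hlN | rfl
  · have hnext := psi_apply_mem_of_lt hKl hlN hxl
    have hfix : Psi T U M K (Psi T U K N x) = Psi T U K N x :=
      psi_apply_of_not_mem_orbitSegment hMK.le
        (h.not_mem_orbitSegment ⟨by omega, by omega⟩ hnext hlow fun hl' => by linarith [hl'.2])
    rw [hfix, psi_apply_of_mem_of_lt hKl hlN hxl, psi_apply_of_mem_of_lt hl.1 hlN hxl]
  · have hK : PsiDefined T U K l := h.mono subset_rfl hMK.le le_rfl
    rw [(h.mono subset_rfl le_rfl hKN.le).psi_apply_of_mem_top (hK.psi_apply_mem_of_top hxl),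
      hK.psi_apply_of_mem_top hxl, ← tpow_add, h.psi_apply_of_mem_top hxl]
    ring_nf

end

theorem stmt18_general (T : X ≃ₜ X) (U : Set X)
    (M N : ℤ) (hMN : M < N) (h : PsiDefined T U M N)
    (k : ℕ) (Us : Fin k → Set X)
    (hdisj : ∀ i j : Fin k, i ≠ j → Disjoint (Us i) (Us j))
    (hunion : U = ⋃ i, Us i) :
    (∀ i, PsiDefined T (Us i) M N) ∧
    (∀ i j : Fin k,
      Psi T (Us i) M N ∘ Psi T (Us j) M N = Psi T (Us j) M N ∘ Psi T (Us i) M N) ∧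
    Psi T U M N = (List.ofFn fun i : Fin k => Psi T (Us i) M N).foldr (· ∘ ·) id ∧
    (2 ≤ N - M → ∀ K : ℤ, M < K → K < N →
      Psi T U M N = Psi T U M K ∘ Psi T U K N) := by
  have hsub : ∀ i, Us i ⊆ U := fun i => hunion ▸ Set.subset_iUnion Us i
  refine ⟨fun i => h.mono (hsub i) le_rfl le_rfl, fun i j => ?_, ?_,
    fun _ K hMK hKN => h.psi_eq_comp hMK hKN⟩
  · rcases eq_or_ne i j with rfl | hij
    · rfl
    rw [← h.psi_union hMN.le (hsub i) (hsub j) (hdisj i j hij),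
      ← h.psi_union hMN.le (hsub j) (hsub i) (hdisj j i hij.symm), Set.union_comm]
  · have hfold := h.foldr_map_psi hMN.le (Ls := List.ofFn Us) (by simpa using hsub)
      (List.pairwise_ofFn.2 fun i j hij => hdisj i j hij.ne)
    rw [List.map_ofFn] at hfold
    simpa [← hunion, Function.comp_def] using hfold.symm

theorem stmt18 [CompactSpace X] [T2Space X]
    [TotallyDisconnectedSpace X] (T : X ≃ₜ X) (U : Set X) (hU : IsClopen U)
    (M N : ℤ) (hMN : M < N) (h : PsiDefined T U M N)
    (k : ℕ) (Us : Fin k → Set X) (hUs : ∀ i, IsClopen (Us i))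
    (hdisj : ∀ i j : Fin k, i ≠ j → Disjoint (Us i) (Us j))
    (hunion : U = ⋃ i, Us i) :
    (∀ i, PsiDefined T (Us i) M N) ∧
    (∀ i j : Fin k,
      Psi T (Us i) M N ∘ Psi T (Us j) M N = Psi T (Us j) M N ∘ Psi T (Us i) M N) ∧
    Psi T U M N = (List.ofFn fun i : Fin k => Psi T (Us i) M N).foldr (· ∘ ·) id ∧
    (2 ≤ N - M → ∀ K : ℤ, M < K → K < N →
      Psi T U M N = Psi T U M K ∘ Psi T U K N) :=
  stmt18_general T U M N hMN h k Us hdisj hunion
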